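/- For any integrable function f on [0, π/T] with 0 ≤ f(ω) ≤ α_M and ∫₀^{π/T} f(ω) dω = α_M·Γ where π/(2T) < Γ ≤ π/T, one has ∫₀^{π/T} f(ω)·cos(ωT) dω ≤ ∫₀^Γ α_M·cos(ωT) dω. -/

import Mathlib

/-!
Bathtub principle: against a decreasing weight `g`, a density `0 ≤ f ≤ M` of prescribed mass
`M * (m - a)` does best when all of its mass sits on `[a, m]`. Subtracting the level `c = g m`
makes the weight nonnegative on `[a, m]` (where `f ≤ M`) and nonpositive on `[m, b]` (where
`0 ≤ f`), while the mass constraint makes the `c`-part contribute equally to both sides.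
Here the weight is `ω ↦ cos (ω T)`, decreasing on `[0, π / T]`.
-/

open Real MeasureTheory intervalIntegral Set

theorem integral_mul_le_integral_of_antitoneOn {f g : ℝ → ℝ} {a m b M : ℝ}
    (ham : a ≤ m) (hmb : m ≤ b) (hg : AntitoneOn g (Icc a b)) (hgc : ContinuousOn g (Icc a b))
    (hf : IntervalIntegrable f volume a b) (hf_bound : ∀ x ∈ Icc a b, 0 ≤ f x ∧ f x ≤ M)
    (hmass : ∫ x in a..b, f x = M * (m - a)) :
    ∫ x in a..b, f x * g x ≤ ∫ x in a..m, M * g x := by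
  set c := g m
  have hab : a ≤ b := ham.trans hmb
  have hm : m ∈ Icc a b := ⟨ham, hmb⟩
  have hsub_left : uIcc a m ⊆ uIcc a b := uIcc_subset_uIcc_left (uIcc_of_le hab ▸ hm)
  have hsub_right : uIcc m b ⊆ uIcc a b := uIcc_subset_uIcc_right (uIcc_of_le hab ▸ hm)
  have hgc' : ContinuousOn (fun x => g x - c) (uIcc a b) :=
    uIcc_of_le hab ▸ hgc.sub continuousOn_const
  have hfg : IntervalIntegrable (fun x => f x * (g x - c)) volume a b := hf.mul_continuousOn hgc'
  have hMg : IntervalIntegrable (fun x => M * (g x - c)) volume a m :=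
    ((hgc'.mono hsub_left).intervalIntegrable).const_mul M
  have hleft : ∫ x in a..m, f x * (g x - c) ≤ ∫ x in a..m, M * (g x - c) := by
    refine integral_mono_on ham (hfg.mono_set hsub_left) hMg fun x hx => ?_
    have hx' : x ∈ Icc a b := ⟨hx.1, hx.2.trans hmb⟩
    exact mul_le_mul_of_nonneg_right (hf_bound x hx').2 (sub_nonneg.2 (hg hx' hm hx.2))
  have hright : ∫ x in m..b, f x * (g x - c) ≤ 0 := by
    refine (integral_mono_on hmb (hfg.mono_set hsub_right) intervalIntegrable_const
      fun x hx => ?_).trans_eq integral_zero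
    have hx' : x ∈ Icc a b := ⟨ham.trans hx.1, hx.2⟩
    exact mul_nonpos_of_nonneg_of_nonpos (hf_bound x hx').1 (sub_nonpos.2 (hg hm hx' hx.1))
  have hsplit : ∫ x in a..b, f x * g x = (∫ x in a..b, f x * (g x - c)) + M * (m - a) * c := by
    rw [← hmass, ← intervalIntegral.integral_mul_const, ← integral_add hfg (hf.mul_const c)]
    exact integral_congr fun x _ => by ring
  have hsquare : ∫ x in a..m, M * g x = (∫ x in a..m, M * (g x - c)) + M * (m - a) * c := by
    have hconst : ∫ _ in a..m, M * c = M * (m - a) * c := by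
      rw [intervalIntegral.integral_const, smul_eq_mul]; ring
    rw [← hconst, ← integral_add hMg intervalIntegrable_const]
    exact integral_congr fun x _ => by ring
  rw [hsplit, hsquare,
    ← integral_add_adjacent_intervals (hfg.mono_set hsub_left) (hfg.mono_set hsub_right)]
  linarith

theorem antitoneOn_cos_mul {T : ℝ} (hT : 0 < T) :
    AntitoneOn (fun ω => cos (ω * T)) (Icc 0 (π / T)) := by
  have hmaps : MapsTo (· * T) (Icc 0 (π / T)) (Icc 0 π) := fun ω hω =>
    ⟨mul_nonneg hω.1 hT.le, (le_div_iff₀ hT).1 hω.2⟩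
  exact antitoneOn_cos.comp_MonotoneOn ((monotone_mul_right_of_nonneg hT.le).monotoneOn _) hmaps

theorem square_tooth_optimal_low_finesse_general
    (T αM Γ : ℝ) (hT : 0 < T)
    (hΓ0 : π / (2 * T) < Γ) (hΓ : Γ ≤ π / T)
    (f : ℝ → ℝ)
    (hint : IntervalIntegrable f volume 0 (π / T))
    (hbound : ∀ ω ∈ Set.Icc 0 (π / T), 0 ≤ f ω ∧ f ω ≤ αM)
    (harea : ∫ ω in (0:ℝ)..(π / T), f ω = αM * Γ) :
    (∫ ω in (0:ℝ)..(π / T), f ω * Real.cos (ω * T)) ≤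
      ∫ ω in (0:ℝ)..Γ, αM * Real.cos (ω * T) := by
  have hΓ_nonneg : 0 ≤ Γ := (div_pos pi_pos (by positivity)).le.trans hΓ0.le
  exact integral_mul_le_integral_of_antitoneOn hΓ_nonneg hΓ (antitoneOn_cos_mul hT)
    (by fun_prop) hint hbound (by rw [harea, sub_zero])

theorem square_tooth_optimal_low_finesse
    (T αM Γ : ℝ) (hT : 0 < T) (hα : 0 < αM)
    (hΓ0 : π / (2 * T) < Γ) (hΓ : Γ ≤ π / T)
    (f : ℝ → ℝ)
    (hint : IntervalIntegrable f volume 0 (π / T))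
    (hbound : ∀ ω ∈ Set.Icc 0 (π / T), 0 ≤ f ω ∧ f ω ≤ αM)
    (harea : ∫ ω in (0:ℝ)..(π / T), f ω = αM * Γ) :
    (∫ ω in (0:ℝ)..(π / T), f ω * Real.cos (ω * T)) ≤
      ∫ ω in (0:ℝ)..Γ, αM * Real.cos (ω * T) :=
  square_tooth_optimal_low_finesse_general T αM Γ hT hΓ0 hΓ f hint hbound harea
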